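/- Let C_0 ⊆ F_2^n be a binary code with minimum weight at least 4 and let C = Span{d(E_n), e(C_0)} ⊆ F_2^{2n}. Then the set of weight-4 codewords of C equals {d(x) : x ∈ E_n, wt(x) = 2} ∪ {e(y) + d(z) : y ∈ C_0 of weight 4, z ∈ E_n, supp(z) ⊆ supp(y)}. -/

import Mathlib

/-- Hamming weight of a binary word. -/
def wt {n : ℕ} (v : Fin n → ZMod 2) : ℕ :=
  (Finset.univ.filter (fun i => v i ≠ 0)).card

/-- Size of the intersection of the supports of two binary words. -/
def interCard {n : ℕ} (v w : Fin n → ZMod 2) : ℕ :=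
  (Finset.univ.filter (fun i => v i ≠ 0 ∧ w i ≠ 0)).card

/-- The doubling map `d : F₂ⁿ → F₂^{2n}`, `(c₁,…,cₙ) ↦ (c₁,c₁,c₂,c₂,…,cₙ,cₙ)`. -/
def dbl {n : ℕ} (c : Fin n → ZMod 2) : Fin (2 * n) → ZMod 2 :=
  fun i => c ⟨(i : ℕ) / 2, by have := i.isLt; omega⟩

/-- The map `e : F₂ⁿ → F₂^{2n}`, `(c₁,…,cₙ) ↦ (0,c₁,0,c₂,…,0,cₙ)`. -/
def emap {n : ℕ} (c : Fin n → ZMod 2) : Fin (2 * n) → ZMod 2 :=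
  fun i => if (i : ℕ) % 2 = 1 then c ⟨(i : ℕ) / 2, by have := i.isLt; omega⟩ else 0

/-- The even-weight code `𝓔ₙ ⊆ F₂ⁿ`. -/
def evenCode (n : ℕ) : Set (Fin n → ZMod 2) := {c | Even (wt c)}

/-!
Every codeword of `C` is `d(z) + e(y)` with `z ∈ 𝓔ₙ` and `y ∈ C₀`. Reading the word in
coordinate pairs `(2i, 2i+1)`, the pair is `(zᵢ, zᵢ + yᵢ)`: it has weight `1` when `yᵢ ≠ 0`,
weight `2` when `zᵢ ≠ 0 = yᵢ`, and weight `0` otherwise. Hence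
`wt (d(z) + e(y)) = wt y + 2 · #(supp z \ supp y)`, and since `wt y` is either `0` or at least
`4`, weight `4` forces either `y = 0, wt z = 2` or `wt y = 4, supp z ⊆ supp y`.
-/

open Finset

namespace BinaryCode

variable {n : ℕ}

def interleave (n : ℕ) : Fin n × Fin 2 ≃ Fin (2 * n) :=
  finProdFinEquiv.trans (finCongr (Nat.mul_comm n 2))

@[simp]
lemma interleave_val (i : Fin n) (b : Fin 2) : (interleave n (i, b) : ℕ) = b + 2 * i := rfl

@[simp]
lemma dbl_interleave (c : Fin n → ZMod 2) (i : Fin n) (b : Fin 2) :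
    dbl c (interleave n (i, b)) = c i := by
  simp only [dbl]
  congr 1
  ext
  simp only [interleave_val]
  omega

lemma emap_apply (c : Fin n → ZMod 2) (w : Fin (2 * n)) :
    emap c w = if (w : ℕ) % 2 = 1 then dbl c w else 0 := rfl

@[simp]
lemma emap_interleave (c : Fin n → ZMod 2) (i : Fin n) (b : Fin 2) :
    emap c (interleave n (i, b)) = if b = 1 then c i else 0 := by
  rw [emap_apply, dbl_interleave, interleave_val]
  fin_cases b <;> simp

lemma wt_eq_sum_interleave (w : Fin (2 * n) → ZMod 2) :
    wt w = ∑ i, ∑ b : Fin 2, if w (interleave n (i, b)) ≠ 0 then 1 else 0 := by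
  rw [wt, card_filter, ← Fintype.sum_prod_type']
  exact (Fintype.sum_equiv (interleave n) _ _ fun _ => rfl).symm

lemma wt_dbl_add_emap (z y : Fin n → ZMod 2) :
    wt (dbl z + emap y) = wt y + 2 * #{i | z i ≠ 0 ∧ y i = 0} := by
  have pair_wt : ∀ a b : ZMod 2,
      (∑ k : Fin 2, if a + (if k = 1 then b else 0) ≠ 0 then 1 else 0 : ℕ) =
        (if b ≠ 0 then 1 else 0) + 2 * (if a ≠ 0 ∧ b = 0 then 1 else 0) := by
    decide
  rw [wt_eq_sum_interleave, wt, card_filter, card_filter, mul_sum, ← sum_add_distrib]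
  refine sum_congr rfl fun i _ => ?_
  simpa only [Pi.add_apply, dbl_interleave, emap_interleave] using pair_wt (z i) (y i)

def dblLin (n : ℕ) : (Fin n → ZMod 2) →ₗ[ZMod 2] Fin (2 * n) → ZMod 2 :=
  LinearMap.funLeft (ZMod 2) (ZMod 2) fun i => ⟨(i : ℕ) / 2, by omega⟩

def emapLin (n : ℕ) : (Fin n → ZMod 2) →ₗ[ZMod 2] Fin (2 * n) → ZMod 2 where
  toFun := emap
  map_add' a b := by funext i; simp only [emap, Pi.add_apply]; split <;> simp
  map_smul' c a := by funext i; simp only [emap, Pi.smul_apply, RingHom.id_apply]; split <;> simp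

lemma emap_zero : emap (0 : Fin n → ZMod 2) = 0 :=
  map_zero (emapLin n)

lemma wt_dbl (z : Fin n → ZMod 2) : wt (dbl z) = 2 * wt z := by
  simpa [emap_zero, wt] using wt_dbl_add_emap z 0

def parity (n : ℕ) : (Fin n → ZMod 2) →ₗ[ZMod 2] ZMod 2 := ∑ i, LinearMap.proj i

lemma parity_apply (c : Fin n → ZMod 2) : parity n c = wt c := by
  rw [parity, LinearMap.sum_apply, wt, ← sum_boole]
  refine sum_congr rfl fun i _ => ?_
  rcases (by decide : ∀ a : ZMod 2, a = 0 ∨ a = 1) (c i) with h | h <;> simp [h]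

lemma evenCode_eq_ker_parity : evenCode n = LinearMap.ker (parity n) := by
  ext c
  rw [SetLike.mem_coe, LinearMap.mem_ker, parity_apply, ZMod.natCast_eq_zero_iff,
    ← even_iff_two_dvd]
  rfl

lemma mem_span_dbl_emap_iff (C₀ : Submodule (ZMod 2) (Fin n → ZMod 2))
    (u : Fin (2 * n) → ZMod 2) :
    u ∈ Submodule.span (ZMod 2) (dbl '' evenCode n ∪ emap '' C₀) ↔
      ∃ z ∈ evenCode n, ∃ y ∈ C₀, u = dbl z + emap y := by
  have hdbl : dbl = ⇑(dblLin n) := rfl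
  have hemap : emap = ⇑(emapLin n) := rfl
  rw [evenCode_eq_ker_parity, hdbl, hemap, Submodule.span_union, ← Submodule.map_span,
    ← Submodule.map_span, Submodule.span_eq, Submodule.span_eq, Submodule.mem_sup]
  simp [Submodule.mem_map, eq_comm]

end BinaryCode

open BinaryCode

/-- for a binary code `C₀ ⊆ F₂ⁿ` of minimum weight at least 4 and
`C = Span{d(𝓔ₙ), e(C₀)}`, the weight-4 codewords of `C` are exactly the `d(x)` with
`x ∈ 𝓔ₙ` of weight 2, together with the `e(y) + d(z)` with `y ∈ C₀` of weight 4,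
`z ∈ 𝓔ₙ` and `supp z ⊆ supp y`. -/
theorem weight_four_codewords_description (n : ℕ)
    (C₀ : Submodule (ZMod 2) (Fin n → ZMod 2))
    (hmin : ∀ y ∈ C₀, y ≠ 0 → 4 ≤ wt y) :
    {u : Fin (2 * n) → ZMod 2 |
        u ∈ Submodule.span (ZMod 2) (dbl '' evenCode n ∪ emap '' C₀) ∧ wt u = 4} =
      {u | ∃ x : Fin n → ZMod 2, x ∈ evenCode n ∧ wt x = 2 ∧ u = dbl x} ∪
      {u | ∃ y ∈ C₀, wt y = 4 ∧ ∃ z : Fin n → ZMod 2, z ∈ evenCode n ∧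
        (∀ i, z i ≠ 0 → y i ≠ 0) ∧ u = emap y + dbl z} := by
  have supp_subset_iff (z y : Fin n → ZMod 2) :
      #{i | z i ≠ 0 ∧ y i = 0} = 0 ↔ ∀ i, z i ≠ 0 → y i ≠ 0 := by
    simp [Finset.card_eq_zero, Finset.filter_eq_empty_iff]
  ext u
  simp only [Set.mem_ofPred_eq, Set.mem_union, mem_span_dbl_emap_iff]
  constructor
  · rintro ⟨⟨z, hz, y, hy, rfl⟩, hw⟩
    rcases eq_or_ne y 0 with rfl | hy0
    · rw [emap_zero, add_zero, wt_dbl] at hw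
      exact Or.inl ⟨z, hz, by omega, by rw [emap_zero, add_zero]⟩
    · have := hmin y hy hy0
      rw [wt_dbl_add_emap] at hw
      exact Or.inr ⟨y, hy, by omega, z, hz, (supp_subset_iff z y).1 (by omega), add_comm _ _⟩
  · rintro (⟨x, hx, hwx, rfl⟩ | ⟨y, hy, hwy, z, hz, hsupp, rfl⟩)
    · exact ⟨⟨x, hx, 0, C₀.zero_mem, by rw [emap_zero, add_zero]⟩, by rw [wt_dbl, hwx]⟩
    · refine ⟨⟨z, hz, y, hy, add_comm _ _⟩, ?_⟩
      rw [add_comm, wt_dbl_add_emap, hwy, (supp_subset_iff z y).2 hsupp]
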